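/- (DiP-reweight is distribution-preserving.) For every integer N ≥ 1, every probability mass function p on Fin N, every α ∈ (0,1), and every token t ∈ Fin N, averaging the DiP-reweight mass of t uniformly over all N! permutations of Fin N recovers the original probability: (1/N!)·∑_{σ ∈ Perm(Fin N)} P_σ(t) = p(t). -/
import Mathlib


/-- Cumulative sum `S_σ(i) = ∑_{j<i} p(σ(j))`. -/
noncomputable def cumS {N : ℕ} (p : Fin N → ℝ) (σ : Equiv.Perm (Fin N)) (i : ℕ) : ℝ :=
  ∑ j ∈ Finset.univ.filter (fun j : Fin N => (j : ℕ) < i), p (σ j)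

/-- `F^α_σ(i) = (1/(1−α)) · max(S_σ(i) − α, 0)`. -/
noncomputable def Falpha {N : ℕ} (p : Fin N → ℝ) (σ : Equiv.Perm (Fin N)) (α : ℝ) (i : ℕ) : ℝ :=
  (1 / (1 - α)) * max (cumS p σ i - α) 0

/-- The `P_W^α`-reweight weight of the token `σ(i)`: `P^α_σ(σ(i)) = F^α_σ(i+1) − F^α_σ(i)`. -/
noncomputable def PWalpha {N : ℕ} (p : Fin N → ℝ) (σ : Equiv.Perm (Fin N)) (α : ℝ)
    (t : Fin N) : ℝ :=
  Falpha p σ α ((σ.symm t : ℕ) + 1) - Falpha p σ α (σ.symm t : ℕ)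

/-- The DiP-reweight distribution `P_σ = (1−α)·P^α_σ + α·P^{1−α}_σ`. -/
noncomputable def DiP {N : ℕ} (p : Fin N → ℝ) (σ : Equiv.Perm (Fin N)) (α : ℝ)
    (t : Fin N) : ℝ :=
  (1 - α) * PWalpha p σ α t + α * PWalpha p σ (1 - α) t

lemma cumS_succ {N : ℕ} (p : Fin N → ℝ) (σ : Equiv.Perm (Fin N)) (i : Fin N) :
    cumS p σ ((i : ℕ) + 1) = cumS p σ (i : ℕ) + p (σ i) := by
  unfold cumS
  have h : Finset.univ.filter (fun j : Fin N => (j : ℕ) < (i : ℕ) + 1)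
      = insert i (Finset.univ.filter (fun j : Fin N => (j : ℕ) < (i : ℕ))) := by
    ext j
    simp only [Finset.mem_filter, Finset.mem_univ, true_and, Finset.mem_insert,
      Nat.lt_succ_iff_lt_or_eq, Fin.ext_iff]
    tauto
  rw [h, Finset.sum_insert (by simp)]
  ring

lemma cumS_rev {N : ℕ} (p : Fin N → ℝ) (σ : Equiv.Perm (Fin N))
    (hsum : ∑ j, p j = 1) (i : ℕ) (hi : i ≤ N) :
    cumS p (σ * Fin.revPerm) i + cumS p σ (N - i) = 1 := by
  have h1 : cumS p (σ * Fin.revPerm) i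
      = ∑ j : Fin N, if ¬ ((j : ℕ) < N - i) then p (σ j) else 0 := by
    unfold cumS
    rw [Finset.sum_filter]
    refine Fintype.sum_equiv Fin.revPerm _ _ (fun j => ?_)
    have hval : ((Fin.rev j : Fin N) : ℕ) = N - ((j : ℕ) + 1) := Fin.val_rev j
    have hjlt : (j : ℕ) < N := j.isLt
    have happ : (σ * Fin.revPerm : Equiv.Perm (Fin N)) j = σ (Fin.rev j) := by
      rw [Equiv.Perm.mul_apply, Fin.revPerm_apply]
    have hcond : ((j : ℕ) < i) ↔ ¬ (((Fin.revPerm j : Fin N) : ℕ) < N - i) := by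
      have : (Fin.revPerm j : Fin N) = Fin.rev j := rfl
      rw [this, hval]; omega
    have happ2 : σ (Fin.revPerm j) = σ (Fin.rev j) := rfl
    rw [happ, happ2, if_congr hcond rfl rfl]
  have h2 : cumS p σ (N - i)
      = ∑ j : Fin N, if (j : ℕ) < N - i then p (σ j) else 0 := Finset.sum_filter _ _
  rw [h1, h2, ← Finset.sum_add_distrib]
  have h3 : ∀ j : Fin N, ((if ¬ ((j : ℕ) < N - i) then p (σ j) else 0)
      + if (j : ℕ) < N - i then p (σ j) else 0) = p (σ j) := by
    intro j; by_cases hc : (j : ℕ) < N - i <;> simp [hc]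
  rw [Finset.sum_congr rfl (fun j _ => h3 j)]
  rw [Equiv.sum_comp σ p, hsum]

lemma key_lemma {N : ℕ} (p : Fin N → ℝ) (σ : Equiv.Perm (Fin N))
    (hsum : ∑ j, p j = 1) (α : ℝ) (hα0 : α ≠ 0) (hα1 : α ≠ 1) (t : Fin N) :
    (1 - α) * PWalpha p σ α t + α * PWalpha p (σ * Fin.revPerm) (1 - α) t = p t := by
  set i₀ : Fin N := σ.symm t with hi₀
  have hσi₀ : σ i₀ = t := σ.apply_symm_apply t
  have hlt : (i₀ : ℕ) < N := i₀.isLt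
  have hsymm : ((σ * Fin.revPerm).symm t : ℕ) = N - ((i₀ : ℕ) + 1) := by
    have : (σ * Fin.revPerm).symm t = Fin.rev i₀ := rfl
    rw [this, Fin.val_rev]
  set s := cumS p σ (i₀ : ℕ) with hs
  have hsucc : cumS p σ ((i₀ : ℕ) + 1) = s + p t := by
    rw [cumS_succ p σ i₀, hσi₀]
  have hrev1 : cumS p (σ * Fin.revPerm) (N - ((i₀ : ℕ) + 1)) = 1 - (s + p t) := by
    have := cumS_rev p σ hsum (N - ((i₀ : ℕ) + 1)) (by omega)
    rw [show N - (N - ((i₀ : ℕ) + 1)) = (i₀ : ℕ) + 1 by omega, hsucc] at this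
    linarith
  have hrev2 : cumS p (σ * Fin.revPerm) ((N - ((i₀ : ℕ) + 1)) + 1) = 1 - s := by
    have := cumS_rev p σ hsum ((N - ((i₀ : ℕ) + 1)) + 1) (by omega)
    rw [show N - ((N - ((i₀ : ℕ) + 1)) + 1) = (i₀ : ℕ) by omega] at this
    linarith
  unfold PWalpha Falpha
  rw [hsymm, hsucc, hrev1, hrev2, ← hs]
  have hA : max (s + p t - α) 0 - max (α - s - p t) 0 = s + p t - α := by
    rw [show α - s - p t = -(s + p t - α) by ring]; exact max_zero_sub_eq_self _
  have hB : max (s - α) 0 - max (α - s) 0 = s - α := by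
    rw [show α - s = -(s - α) by ring]; exact max_zero_sub_eq_self _
  have h1α : (1 : ℝ) - α ≠ 0 := by intro h; apply hα1; linarith [h]
  have e1 : (1 - α) * ((1 / (1 - α)) * max (s + p t - α) 0) = max (s + p t - α) 0 := by
    field_simp
  have e2 : (1 - α) * ((1 / (1 - α)) * max (s - α) 0) = max (s - α) 0 := by
    field_simp
  have h1 : (1 : ℝ) - (1 - α) = α := by ring
  rw [h1]
  have e3 : α * ((1 / α) * max (1 - s - (1 - α)) 0) = max (α - s) 0 := by
    rw [show (1 : ℝ) - s - (1 - α) = α - s by ring]; field_simp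
  have e4 : α * ((1 / α) * max (1 - (s + p t) - (1 - α)) 0) = max (α - s - p t) 0 := by
    rw [show (1 : ℝ) - (s + p t) - (1 - α) = α - s - p t by ring]; field_simp
  nlinarith [hA, hB, e1, e2, e3, e4]

lemma revPerm_sq {N : ℕ} (σ : Equiv.Perm (Fin N)) :
    σ * Fin.revPerm * Fin.revPerm = σ := by
  ext j
  simp [Equiv.Perm.mul_apply]

lemma pair_lemma {N : ℕ} (p : Fin N → ℝ) (σ : Equiv.Perm (Fin N))
    (hsum : ∑ j, p j = 1) (α : ℝ) (hα0 : α ≠ 0) (hα1 : α ≠ 1) (t : Fin N) :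
    DiP p σ α t + DiP p (σ * Fin.revPerm) α t = 2 * p t := by
  have k1 := key_lemma p σ hsum α hα0 hα1 t
  have k2 := key_lemma p (σ * Fin.revPerm) hsum α hα0 hα1 t
  rw [revPerm_sq] at k2
  unfold DiP
  linarith

theorem stmt_6 (N : ℕ) (hN : 1 ≤ N) (p : Fin N → ℝ)
    (hp : ∀ j, 0 ≤ p j) (hsum : ∑ j, p j = 1)
    (α : ℝ) (hα0 : 0 < α) (hα1 : α < 1) (t : Fin N) :
    (1 / (Nat.factorial N : ℝ)) * ∑ σ : Equiv.Perm (Fin N), DiP p σ α t = p t := by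
  have hre : ∑ σ : Equiv.Perm (Fin N), DiP p (σ * Fin.revPerm) α t
      = ∑ σ : Equiv.Perm (Fin N), DiP p σ α t :=
    Fintype.sum_equiv (Equiv.mulRight Fin.revPerm) _ _ (fun σ => rfl)
  have hsum2 : (2 : ℝ) * ∑ σ : Equiv.Perm (Fin N), DiP p σ α t
      = ∑ σ : Equiv.Perm (Fin N), 2 * p t := by
    rw [Finset.sum_congr rfl (fun σ _ =>
      (pair_lemma p σ hsum α (ne_of_gt hα0) (ne_of_lt hα1) t).symm)]
    rw [Finset.sum_add_distrib, hre]
    ring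
  have hcard : (Finset.univ : Finset (Equiv.Perm (Fin N))).card = Nat.factorial N := by
    simp [Fintype.card_perm]
  rw [Finset.sum_const, hcard] at hsum2
  have hfac : (Nat.factorial N : ℝ) ≠ 0 := Nat.cast_ne_zero.mpr (Nat.factorial_ne_zero N)
  have : ∑ σ : Equiv.Perm (Fin N), DiP p σ α t = (Nat.factorial N : ℝ) * p t := by
    have := hsum2
    simp only [nsmul_eq_mul] at this
    linarith
  rw [this]
  field_simp
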